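/- arXiv:2004.00662 — 3 statements merged into one kernel-verified Lean document; each statement's English description precedes it below -/
import Mathlib

section
/- For the homogeneous polynomial kernel k(x,y) = (x^T y)^p on R^n, every function of the form x ↦ Σ_{i=1}^N c_i k(x, x^(i)) (i.e., every element of the span of kernel sections) lies in the span of the monomials of total degree exactly p; conversely, every monomial of total degree exactly p can be written as a finite linear combination of kernel sections x ↦ (x^T y^(j))^p for suitable points y^(j) ∈ R^n. -/
/-!
Expanding `(∑ i, x i * y i) ^ p` by the multinomial theorem writes every kernel section as a
combination of the degree-`p` monomials. Conversely, if a linear functional `ψ` kills every kernel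
section, then `y ↦ ψ (k(·, y))` is the zero polynomial function; its coefficient at `d` is
`multinomial d * ψ (x ^ d)`, and multinomial coefficients are nonzero in characteristic zero, so
`ψ` kills every monomial. Over a field, a vector killed by the annihilator of a subspace lies in it.
-/

open Finset MvPolynomial

namespace HomogeneousPolynomialKernel

variable {ι R : Type*} [Fintype ι]

section CommSemiring

variable [CommSemiring R]

def kernelSection (p : ℕ) (y : ι → R) : (ι → R) → R := fun x => (∑ i, x i * y i) ^ p

def monomialFun (d : ι → ℕ) : (ι → R) → R := fun x => ∏ i, x i ^ d i

variable [DecidableEq ι]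

theorem kernelSection_eq_sum (p : ℕ) (y : ι → R) :
    kernelSection p y = ∑ k ∈ piAntidiag univ p,
      ((Nat.multinomial univ k : R) * ∏ i, y i ^ k i) • monomialFun k := by
  funext x
  simp only [kernelSection, monomialFun, sum_pow_eq_sum_piAntidiag, Finset.sum_apply,
    Pi.smul_apply, smul_eq_mul, mul_pow, prod_mul_distrib]
  exact sum_congr rfl fun k _ => by ring

theorem span_range_kernelSection_le (p : ℕ) :
    Submodule.span R (Set.range (kernelSection (ι := ι) (R := R) p)) ≤
      Submodule.span R (monomialFun '' {d | ∑ i, d i = p}) := by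
  refine Submodule.span_le.2 ?_
  rintro _ ⟨y, rfl⟩
  rw [kernelSection_eq_sum]
  exact Submodule.sum_mem _ fun k hk => Submodule.smul_mem _ _
    (Submodule.subset_span ⟨k, (mem_piAntidiag.1 hk).1, rfl⟩)

/-- Viewed as a function of `y`, `ψ (kernelSection p y)` is the evaluation of this polynomial. -/
noncomputable def dualPolynomial (ψ : Module.Dual R ((ι → R) → R)) (p : ℕ) :
    MvPolynomial ι R :=
  ∑ k ∈ piAntidiag univ p,
    monomial (Finsupp.equivFunOnFinite.symm k) (Nat.multinomial univ k * ψ (monomialFun k))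

theorem eval_dualPolynomial (ψ : Module.Dual R ((ι → R) → R)) (p : ℕ) (y : ι → R) :
    eval y (dualPolynomial ψ p) = ψ (kernelSection p y) := by
  simp only [dualPolynomial, kernelSection_eq_sum, map_sum, map_smul, smul_eq_mul, eval_monomial,
    Finsupp.prod_pow, Finsupp.coe_equivFunOnFinite_symm]
  exact sum_congr rfl fun k _ => by ring

theorem coeff_dualPolynomial (ψ : Module.Dual R ((ι → R) → R)) {p : ℕ} {d : ι → ℕ}
    (hd : ∑ i, d i = p) :
    coeff (Finsupp.equivFunOnFinite.symm d) (dualPolynomial ψ p) =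
      Nat.multinomial univ d * ψ (monomialFun d) := by
  simp [dualPolynomial, coeff_sum, coeff_monomial, hd]

end CommSemiring

theorem dual_monomialFun_eq_zero [DecidableEq ι] [CommRing R] [IsDomain R] [CharZero R]
    {ψ : Module.Dual R ((ι → R) → R)} {p : ℕ}
    (hψ : ∀ y, ψ (kernelSection p y) = 0) {d : ι → ℕ} (hd : ∑ i, d i = p) :
    ψ (monomialFun d) = 0 := by
  have : Infinite R := Infinite.of_injective _ Nat.cast_injective
  have hzero : dualPolynomial ψ p = 0 :=
    MvPolynomial.funext fun y => by rw [eval_dualPolynomial, hψ, map_zero]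
  have hcoeff := coeff_dualPolynomial ψ hd
  rw [hzero, coeff_zero, eq_comm] at hcoeff
  exact (mul_eq_zero.1 hcoeff).resolve_left (by exact_mod_cast (Nat.multinomial_pos _ _).ne')

theorem monomialFun_mem_span_range_kernelSection [Field R] [CharZero R]
    [DecidableEq ι] {p : ℕ} {d : ι → ℕ} (hd : ∑ i, d i = p) :
    monomialFun d ∈ Submodule.span R (Set.range (kernelSection (ι := ι) (R := R) p)) := by
  rw [← Subspace.forall_mem_dualAnnihilator_apply_eq_zero_iff]
  intro ψ hψ
  rw [Submodule.mem_dualAnnihilator] at hψ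
  exact dual_monomialFun_eq_zero (fun y => hψ _ (Submodule.subset_span ⟨y, rfl⟩)) hd

end HomogeneousPolynomialKernel

open HomogeneousPolynomialKernel in
theorem homogeneous_kernel_sections_span_general
    (n p : ℕ) :
    (Submodule.span ℝ
        {f : (Fin n → ℝ) → ℝ | ∃ y : Fin n → ℝ, f = fun x => (∑ i, x i * y i) ^ p} ≤
      Submodule.span ℝ
        {f : (Fin n → ℝ) → ℝ | ∃ d : Fin n → ℕ, (∑ i, d i) = p ∧
          f = fun x => ∏ i, x i ^ d i}) ∧
    (∀ d : Fin n → ℕ, (∑ i, d i) = p →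
      (fun x : Fin n → ℝ => ∏ i, x i ^ d i) ∈
        Submodule.span ℝ
          {f : (Fin n → ℝ) → ℝ | ∃ y : Fin n → ℝ, f = fun x => (∑ i, x i * y i) ^ p}) := by
  have hsections : {f : (Fin n → ℝ) → ℝ | ∃ y : Fin n → ℝ, f = fun x => (∑ i, x i * y i) ^ p} =
      Set.range (kernelSection p) := by
    ext f; exact exists_congr fun y => eq_comm
  have hmonomials : {f : (Fin n → ℝ) → ℝ | ∃ d : Fin n → ℕ, (∑ i, d i) = p ∧
      f = fun x => ∏ i, x i ^ d i} = monomialFun '' {d | ∑ i, d i = p} := by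
    ext f; exact exists_congr fun d => and_congr_right' eq_comm
  rw [hsections, hmonomials]
  exact ⟨span_range_kernelSection_le p, fun d hd => monomialFun_mem_span_range_kernelSection hd⟩

/-- For `k(x,y) = (xᵀy)^p`, the span of the kernel sections equals
(is contained in, and contains all of) the span of the monomials of total degree
exactly `p`. -/
theorem homogeneous_kernel_sections_span
    (n p : ℕ) (hp : 0 < p) :
    (Submodule.span ℝ
        {f : (Fin n → ℝ) → ℝ | ∃ y : Fin n → ℝ, f = fun x => (∑ i, x i * y i) ^ p} ≤
      Submodule.span ℝ
        {f : (Fin n → ℝ) → ℝ | ∃ d : Fin n → ℕ, (∑ i, d i) = p ∧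
          f = fun x => ∏ i, x i ^ d i}) ∧
    (∀ d : Fin n → ℕ, (∑ i, d i) = p →
      (fun x : Fin n → ℝ => ∏ i, x i ^ d i) ∈
        Submodule.span ℝ
          {f : (Fin n → ℝ) → ℝ | ∃ y : Fin n → ℝ, f = fun x => (∑ i, x i * y i) ^ p}) :=
  homogeneous_kernel_sections_span_general n p
end

section
/- Let k(x,y) = Σ_{j=1}^p α_j^2 (x^T y)^j with all α_j ≠ 0. Then the linear span of the kernel sections x ↦ k(x,y), over y ∈ R^n, equals the space of all polynomials q on R^n of total degree at most p satisfying q(0) = 0. -/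
/-!
Expanding `(x ⬝ᵥ y) ^ m` by the multinomial theorem writes the kernel as
`k x y = ∑ β, c β * y ^ β * x ^ β`, over the exponents `β` of total degree `1, …, p`, with
`c β = α (|β| - 1) ^ 2 * multinomial β ≠ 0`. Distinct monomials are linearly independent
functions over an infinite field, hence so are the `y ↦ c β * y ^ β`, and therefore the vectors
`(c β * y ^ β)_β` span the whole coefficient space: a linear form vanishing on all of them would
be a linear relation among these functions. So the sections span exactly the monomials `x ^ β`
with `1 ≤ |β| ≤ p`, i.e. the polynomial functions of degree at most `p` vanishing at `0`.
-/

open MvPolynomial Finset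

section SpanOfSections
variable {K V Y ι : Type*} [Field K] [AddCommGroup V] [Module K V] [Fintype ι]

theorem span_range_eval_eq_top_of_linearIndependent {b : ι → Y → K}
    (hb : LinearIndependent K b) : Submodule.span K (Set.range fun y i => b i y) = ⊤ := by
  by_contra hne
  obtain ⟨φ, hφ, hφw⟩ :=
    Submodule.exists_dual_map_eq_bot_of_lt_top (Ne.lt_top hne) inferInstance
  have hvanish (y : Y) : φ (fun i => b i y) = 0 := (Submodule.mem_bot K).1
    (hφw ▸ Submodule.mem_map_of_mem (Submodule.subset_span ⟨y, rfl⟩))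
  classical
  obtain ⟨c, hφc⟩ : ∃ c : ι → K, ∀ x, φ x = ∑ i, x i * c i :=
    ⟨_, φ.pi_apply_eq_sum_univ⟩
  have hc : c = 0 := by
    refine funext (Fintype.linearIndependent_iff.1 hb c (funext fun y => ?_))
    simpa [hφc, mul_comm] using hvanish y
  exact hφ (LinearMap.ext fun x => by simp [hφc, hc])

theorem span_range_sum_smul_eq_span_range {b : ι → Y → K} (hb : LinearIndependent K b)
    (u : ι → V) :
    Submodule.span K (Set.range fun y => ∑ i, b i y • u i) =
      Submodule.span K (Set.range u) := by
  have hcomp :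
      (fun y => ∑ i, b i y • u i) = Fintype.linearCombination K u ∘ fun y i => b i y := rfl
  rw [hcomp, Set.range_comp, ← Submodule.map_span,
    span_range_eval_eq_top_of_linearIndependent hb, Submodule.map_top,
    Fintype.range_linearCombination]

end SpanOfSections

section MonomialFunctions

variable {σ K : Type*}

noncomputable def evalLinearMap [CommSemiring K] : MvPolynomial σ K →ₗ[K] (σ → K) → K :=
  LinearMap.pi fun x => (aeval x).toLinearMap

theorem evalLinearMap_apply [CommSemiring K] (q : MvPolynomial σ K) :
    evalLinearMap q = fun x => eval x q := by
  funext x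
  simp [evalLinearMap]

theorem evalLinearMap_injective [CommRing K] [IsDomain K] [Infinite K] :
    Function.Injective (evalLinearMap : MvPolynomial σ K →ₗ[K] (σ → K) → K) :=
  fun p q h => MvPolynomial.funext fun x => by simpa [evalLinearMap_apply] using congrFun h x

variable [Fintype σ]

def monomialFun [CommSemiring K] (k : σ → ℕ) (x : σ → K) : K := ∏ i, x i ^ k i

theorem dotProduct_pow_eq_sum_multinomial [CommSemiring K] [DecidableEq σ] (x y : σ → K)
    (m : ℕ) :
    (x ⬝ᵥ y) ^ m =
      ∑ k ∈ piAntidiag univ m, Nat.multinomial univ k * monomialFun k y * monomialFun k x := by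
  rw [dotProduct, sum_pow_eq_sum_piAntidiag]
  refine sum_congr rfl fun k _ => ?_
  simp only [monomialFun, mul_pow, prod_mul_distrib]
  ring

theorem evalLinearMap_monomial_one [CommSemiring K] (d : σ →₀ ℕ) :
    evalLinearMap (monomial d (1 : K)) = monomialFun d := by
  funext x
  simp [evalLinearMap_apply, eval_monomial, Finsupp.prod_pow, monomialFun]

theorem evalLinearMap_eq_sum [CommSemiring K] (q : MvPolynomial σ K) :
    evalLinearMap q = ∑ d ∈ q.support, coeff d q • monomialFun d := by
  funext x
  simp [evalLinearMap_apply, eval_eq', monomialFun]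

theorem linearIndependent_monomialFun [CommRing K] [IsDomain K] [Infinite K] :
    LinearIndependent K (monomialFun : (σ → ℕ) → (σ → K) → K) := by
  have hmon : (monomialFun : (σ → ℕ) → (σ → K) → K) =
      (evalLinearMap ∘ basisMonomials σ K) ∘ Finsupp.equivFunOnFinite.symm := by
    funext k
    simp [evalLinearMap_monomial_one]
  rw [hmon]
  exact ((basisMonomials σ K).linearIndependent.map' evalLinearMap
    (LinearMap.ker_eq_bot.2 evalLinearMap_injective)).comp _
    Finsupp.equivFunOnFinite.symm.injective

end MonomialFunctions

/-- `⟨j, k⟩` is an exponent `k` of total degree `j + 1`, coming from the term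
`α j ^ 2 * (x ⬝ᵥ y) ^ (j + 1)` of the kernel. -/
abbrev PolyKernelIndex (σ : Type*) [Fintype σ] [DecidableEq σ] (p : ℕ) :=
  Σ j : Fin p, piAntidiag (univ : Finset σ) ((j : ℕ) + 1)

namespace PolyKernelIndex

variable {σ : Type*} [Fintype σ] [DecidableEq σ] {p : ℕ}

def exponent (i : PolyKernelIndex σ p) : σ → ℕ := i.2

theorem exponent_injective :
    Function.Injective (exponent : PolyKernelIndex σ p → σ → ℕ) := by
  rintro ⟨j, k, hk⟩ ⟨j', k', hk'⟩ (rfl : k = k')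
  have hdeg := (mem_piAntidiag.1 hk).1.symm.trans (mem_piAntidiag.1 hk').1
  exact Sigma.subtype_ext (Fin.ext (by simpa using hdeg)) rfl

end PolyKernelIndex

section PolynomialKernel

open PolyKernelIndex

variable {σ K : Type*} [Fintype σ] [DecidableEq σ] {p : ℕ}

def polyKernelWeight [CommSemiring K] (α : Fin p → K) (i : PolyKernelIndex σ p) : K :=
  α i.1 ^ 2 * Nat.multinomial univ i.exponent

theorem polyKernel_section_eq_sum [CommSemiring K] (α : Fin p → K) (y : σ → K) :
    (fun x => ∑ j : Fin p, α j ^ 2 * (x ⬝ᵥ y) ^ ((j : ℕ) + 1)) =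
      ∑ i : PolyKernelIndex σ p,
        (polyKernelWeight α i • monomialFun i.exponent) y • monomialFun i.exponent := by
  funext x
  simp only [dotProduct_pow_eq_sum_multinomial, Fintype.sum_sigma, Finset.sum_apply,
    Pi.smul_apply, smul_eq_mul, polyKernelWeight, mul_sum]
  refine sum_congr rfl fun j _ => ?_
  rw [← sum_coe_sort]
  refine sum_congr rfl fun k _ => ?_
  simp only [exponent]
  ring

theorem linearIndependent_polyKernelWeight_smul_monomialFun [Field K] [CharZero K]
    {α : Fin p → K} (hα : ∀ j, α j ≠ 0) :
    LinearIndependent K fun i : PolyKernelIndex σ p =>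
      polyKernelWeight α i • monomialFun (K := K) i.exponent :=
  (linearIndependent_monomialFun.comp _ exponent_injective).units_smul
    fun i => Units.mk0 _ (mul_ne_zero (pow_ne_zero 2 (hα i.1))
      (Nat.cast_ne_zero.2 (Nat.multinomial_pos _ _).ne'))

theorem span_range_monomialFun_exponent [CommSemiring K] :
    Submodule.span K (Set.range fun i : PolyKernelIndex σ p => monomialFun (K := K) i.exponent) =
      (restrictTotalDegree σ K p ⊓ LinearMap.ker (lcoeff K 0)).map evalLinearMap := by
  apply le_antisymm
  · rw [Submodule.span_le]
    rintro _ ⟨⟨j, k, hk⟩, rfl⟩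
    set d := Finsupp.equivFunOnFinite.symm k
    have hdeg : d.degree = j + 1 := by
      rw [Finsupp.degree_eq_sum]
      simpa [d] using (mem_piAntidiag.1 hk).1
    have hd0 : d ≠ 0 := by
      rintro h
      simp [h] at hdeg
    refine ⟨monomial d 1, ⟨?_, ?_⟩, ?_⟩
    · rw [SetLike.mem_coe, mem_restrictTotalDegree]
      exact (totalDegree_monomial_le d 1).trans (by change d.degree ≤ p; omega)
    · simp [coeff_monomial, hd0]
    · simp [d, exponent, evalLinearMap_monomial_one]
  · rintro _ ⟨q, ⟨hdeg, hconst⟩, rfl⟩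
    rw [evalLinearMap_eq_sum]
    refine Submodule.sum_mem _ fun d hd => Submodule.smul_mem _ _ (Submodule.subset_span ?_)
    have hd0 : d ≠ 0 := by
      rintro rfl
      exact mem_support_iff.1 hd hconst
    have hdeg_d : d.degree ≤ p :=
      (le_totalDegree hd).trans ((mem_restrictTotalDegree σ p q).1 hdeg)
    have hpos : 0 < d.degree := Nat.pos_of_ne_zero ((Finsupp.degree_eq_zero_iff d).not.2 hd0)
    have hd_mem : ⇑d ∈ piAntidiag univ (d.degree - 1 + 1) :=
      mem_piAntidiag.2 ⟨by rw [← Finsupp.degree_eq_sum]; omega, by simp⟩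
    exact ⟨⟨⟨d.degree - 1, by omega⟩, ⟨d, hd_mem⟩⟩, rfl⟩

end PolynomialKernel

theorem sum_polynomial_kernel_sections_span_general
    (n p : ℕ) (α : Fin p → ℝ) (hα : ∀ j, α j ≠ 0)
    (k : (Fin n → ℝ) → (Fin n → ℝ) → ℝ)
    (hk : ∀ x y, k x y = ∑ j : Fin p, (α j) ^ 2 * (∑ i, x i * y i) ^ ((j : ℕ) + 1)) :
    (Submodule.span ℝ {f : (Fin n → ℝ) → ℝ | ∃ y : Fin n → ℝ, f = fun x => k x y} :
        Set ((Fin n → ℝ) → ℝ)) =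
      {f : (Fin n → ℝ) → ℝ | ∃ q : MvPolynomial (Fin n) ℝ,
        q.totalDegree ≤ p ∧ MvPolynomial.eval (0 : Fin n → ℝ) q = 0 ∧
        f = fun x => MvPolynomial.eval x q} := by
  have hsections : {f : (Fin n → ℝ) → ℝ | ∃ y : Fin n → ℝ, f = fun x => k x y} =
      Set.range fun y => ∑ i : PolyKernelIndex (Fin n) p,
        (polyKernelWeight α i • monomialFun (K := ℝ) i.exponent) y •
          monomialFun i.exponent := by
    refine Set.ext fun f => exists_congr fun y => ?_
    rw [eq_comm]
    exact Eq.congr_left ((funext fun x => hk x y).trans (polyKernel_section_eq_sum α y))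
  rw [hsections, span_range_sum_smul_eq_span_range
    (linearIndependent_polyKernelWeight_smul_monomialFun hα), span_range_monomialFun_exponent]
  ext f
  simp [mem_restrictTotalDegree, evalLinearMap_apply, eval_zero, constantCoeff_eq, eq_comm,
    and_assoc]

/-- For `k(x,y) = ∑_{j=1}^p α_j² (xᵀy)^j` with all `α_j ≠ 0`, the span of
the kernel sections equals the set of (evaluation functions of) polynomials `q` of total
degree at most `p` with `q(0) = 0`. -/
theorem sum_polynomial_kernel_sections_span
    (n p : ℕ) (hp : 0 < p) (α : Fin p → ℝ) (hα : ∀ j, α j ≠ 0)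
    (k : (Fin n → ℝ) → (Fin n → ℝ) → ℝ)
    (hk : ∀ x y, k x y = ∑ j : Fin p, (α j) ^ 2 * (∑ i, x i * y i) ^ ((j : ℕ) + 1)) :
    (Submodule.span ℝ {f : (Fin n → ℝ) → ℝ | ∃ y : Fin n → ℝ, f = fun x => k x y} :
        Set ((Fin n → ℝ) → ℝ)) =
      {f : (Fin n → ℝ) → ℝ | ∃ q : MvPolynomial (Fin n) ℝ,
        q.totalDegree ≤ p ∧ MvPolynomial.eval (0 : Fin n → ℝ) q = 0 ∧
        f = fun x => MvPolynomial.eval x q} :=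
  sum_polynomial_kernel_sections_span_general n p α hα k hk
end

section
/- Monotonicity of GP posterior variance in the data: for a positive semidefinite kernel k and σ_n > 0, adding a data point never increases the posterior variance at any point; i.e., if Var_N(x) = k(x,x) − k_{*,N}(x)^T (K_N + σ_n I)^{-1} k_{*,N}(x) is the posterior variance with data points x^(1),...,x^(N) and Var_{N+1}(x) the posterior variance after adding one more point x^(N+1), then Var_{N+1}(x) ≤ Var_N(x) for all x. -/
/-!
For positive definite `B`, `v ⬝ᵥ B⁻¹ v` is the maximum of `2 (w ⬝ᵥ v) - w ⬝ᵥ B w` over `w`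
(complete the square), attained at `w = B⁻¹ v`. Extending the maximiser for the principal
submatrix `K_N + σ I` by zero gives a competitor for `K_{N+1} + σ I` with the same value, so the
subtracted term can only grow when a data point is added.
-/

open Matrix Function

section ExtendByZero

variable {ι κ R : Type*} [Fintype ι] [Fintype κ] [CommSemiring R] {e : ι → κ}

theorem extend_zero_dotProduct (he : Injective e) (z : ι → R) (u : κ → R) :
    extend e z 0 ⬝ᵥ u = z ⬝ᵥ (u ∘ e) := by
  refine (Fintype.sum_of_injective e he _ _ (fun j hj => ?_) fun i => ?_).symm
  · rw [extend_apply' _ _ _ (by simpa using hj), Pi.zero_apply, zero_mul]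
  · rw [he.extend_apply, Function.comp_apply]

theorem mulVec_extend_zero_comp (he : Injective e) (B : Matrix κ κ R) (z : ι → R) :
    (B *ᵥ extend e z 0) ∘ e = B.submatrix e e *ᵥ z := by
  ext i
  change (fun j => B (e i) j) ⬝ᵥ extend e z 0 = (fun j => B (e i) (e j)) ⬝ᵥ z
  rw [dotProduct_comm, extend_zero_dotProduct he, dotProduct_comm]
  rfl

theorem extend_zero_dotProduct_mulVec (he : Injective e) (B : Matrix κ κ R) (z : ι → R) :
    extend e z 0 ⬝ᵥ (B *ᵥ extend e z 0) = z ⬝ᵥ (B.submatrix e e *ᵥ z) := by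
  rw [extend_zero_dotProduct he, mulVec_extend_zero_comp he]

end ExtendByZero

namespace Matrix.PosDef

variable {ι κ 𝕜 : Type*} [Fintype ι] [Fintype κ] [DecidableEq ι] [DecidableEq κ]
  [Field 𝕜] [LinearOrder 𝕜] [IsStrictOrderedRing 𝕜] [StarRing 𝕜] [TrivialStar 𝕜]

theorem two_mul_dotProduct_sub_le_dotProduct_inv_mulVec {B : Matrix κ κ 𝕜} (hB : B.PosDef)
    (v w : κ → 𝕜) : 2 * (w ⬝ᵥ v) - w ⬝ᵥ (B *ᵥ w) ≤ v ⬝ᵥ (B⁻¹ *ᵥ v) := by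
  have hBt : Bᵀ = B := by simpa using hB.isHermitian.eq
  have hBinv : B *ᵥ (B⁻¹ *ᵥ v) = v := by
    rw [mulVec_mulVec, mul_nonsing_inv _ ((isUnit_iff_isUnit_det B).1 hB.isUnit), one_mulVec]
  have hsymm (a b : κ → 𝕜) : a ⬝ᵥ (B *ᵥ b) = b ⬝ᵥ (B *ᵥ a) := by
    rw [dotProduct_mulVec, ← mulVec_transpose, hBt, dotProduct_comm]
  have hnonneg := hB.posSemidef.dotProduct_mulVec_nonneg (w - B⁻¹ *ᵥ v)
  rw [star_trivial] at hnonneg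
  have hexpand : (w - B⁻¹ *ᵥ v) ⬝ᵥ (B *ᵥ (w - B⁻¹ *ᵥ v)) =
      w ⬝ᵥ (B *ᵥ w) - 2 * (w ⬝ᵥ v) + v ⬝ᵥ (B⁻¹ *ᵥ v) := by
    simp only [mulVec_sub, dotProduct_sub, sub_dotProduct, hBinv, hsymm (B⁻¹ *ᵥ v) w]
    rw [dotProduct_comm (B⁻¹ *ᵥ v) v]
    ring
  linarith

theorem dotProduct_submatrix_inv_mulVec_le {B : Matrix κ κ 𝕜} (hB : B.PosDef) {e : ι → κ}
    (he : Injective e) (v : κ → 𝕜) :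
    (v ∘ e) ⬝ᵥ ((B.submatrix e e)⁻¹ *ᵥ (v ∘ e)) ≤ v ⬝ᵥ (B⁻¹ *ᵥ v) := by
  set A := B.submatrix e e
  set z := A⁻¹ *ᵥ (v ∘ e)
  have hAz : A *ᵥ z = v ∘ e := by
    rw [mulVec_mulVec, mul_nonsing_inv _ ((isUnit_iff_isUnit_det A).1 (hB.submatrix he).isUnit),
      one_mulVec]
  calc (v ∘ e) ⬝ᵥ z = 2 * (z ⬝ᵥ (v ∘ e)) - z ⬝ᵥ (A *ᵥ z) := by
        rw [hAz, dotProduct_comm]; ring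
    _ = 2 * (extend e z 0 ⬝ᵥ v) - extend e z 0 ⬝ᵥ (B *ᵥ extend e z 0) := by
        rw [extend_zero_dotProduct he, extend_zero_dotProduct_mulVec he]
    _ ≤ v ⬝ᵥ (B⁻¹ *ᵥ v) := hB.two_mul_dotProduct_sub_le_dotProduct_inv_mulVec v _

end Matrix.PosDef

theorem Matrix.posSemidef_of_kernel {X : Type*} {k : X → X → ℝ} (hsymm : ∀ x y, k x y = k y x)
    (hpsd : ∀ (M : ℕ) (pts : Fin M → X) (c : Fin M → ℝ),
      0 ≤ ∑ i, ∑ j, c i * c j * k (pts i) (pts j))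
    {M : ℕ} (pts : Fin M → X) : (Matrix.of fun i j => k (pts i) (pts j)).PosSemidef := by
  refine posSemidef_iff_dotProduct_mulVec.2 ⟨?_, fun c => ?_⟩
  · ext i j
    exact hsymm _ _
  · refine (hpsd M pts c).trans_eq ?_
    simp only [star_trivial, dotProduct, mulVec, of_apply, Finset.mul_sum]
    exact Finset.sum_congr rfl fun i _ => Finset.sum_congr rfl fun j _ => by ring

/-- adding a data point never increases the GP posterior variance. -/
theorem gp_posterior_variance_monotone
    (n N : ℕ) (k : (Fin n → ℝ) → (Fin n → ℝ) → ℝ)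
    (hsymm : ∀ x y, k x y = k y x)
    (hpsd : ∀ (M : ℕ) (pts : Fin M → (Fin n → ℝ)) (c : Fin M → ℝ),
      0 ≤ ∑ i, ∑ j, c i * c j * k (pts i) (pts j))
    (pts : Fin (N + 1) → (Fin n → ℝ)) (σn : ℝ) (hσ : 0 < σn)
    (KN : Matrix (Fin N) (Fin N) ℝ)
    (hKN : ∀ i j, KN i j = k (pts i.castSucc) (pts j.castSucc))
    (KN1 : Matrix (Fin (N + 1)) (Fin (N + 1)) ℝ)
    (hKN1 : ∀ i j, KN1 i j = k (pts i) (pts j))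
    (VarN VarN1 : (Fin n → ℝ) → ℝ)
    (hVarN : ∀ x, VarN x = k x x -
      (fun i : Fin N => k x (pts i.castSucc)) ⬝ᵥ
        ((KN + σn • (1 : Matrix (Fin N) (Fin N) ℝ))⁻¹ *ᵥ
          fun i : Fin N => k x (pts i.castSucc)))
    (hVarN1 : ∀ x, VarN1 x = k x x -
      (fun i : Fin (N + 1) => k x (pts i)) ⬝ᵥ
        ((KN1 + σn • (1 : Matrix (Fin (N + 1)) (Fin (N + 1)) ℝ))⁻¹ *ᵥ
          fun i : Fin (N + 1) => k x (pts i))) :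
    ∀ x : Fin n → ℝ, VarN1 x ≤ VarN x := by
  intro x
  have hKN1_gram : KN1 = of fun i j => k (pts i) (pts j) := Matrix.ext hKN1
  have hpos : (KN1 + σn • (1 : Matrix (Fin (N + 1)) (Fin (N + 1)) ℝ)).PosDef := by
    rw [hKN1_gram]
    exact PosDef.posSemidef_add (posSemidef_of_kernel hsymm hpsd pts) (PosDef.one.smul hσ)
  have hsub : (KN1 + σn • (1 : Matrix (Fin (N + 1)) (Fin (N + 1)) ℝ)).submatrix
      Fin.castSucc Fin.castSucc = KN + σn • 1 := by
    ext i j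
    simp only [submatrix_apply, Matrix.add_apply, Matrix.smul_apply, one_apply, Fin.castSucc_inj,
      hKN, hKN1]
  have hquad := hpos.dotProduct_submatrix_inv_mulVec_le (Fin.castSucc_injective N)
    fun i => k x (pts i)
  rw [hsub] at hquad
  rw [hVarN, hVarN1]
  exact sub_le_sub_left hquad _
end
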